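/- arXiv:2505.01388 — 3 statements merged into one kernel-verified Lean document; each statement's English description precedes it below -/
import Mathlib

section
/- Multi-class NPC equals 1 if and only if the supports of the P_i are pairwise disjoint: for probability mass functions P_1, …, P_n on a finite set X with n ≥ 2, ((∑_{x∈X} max_i P_i(x)) − 1)/(n−1) = 1 if and only if for all i ≠ j and all x ∈ X, P_i(x) · P_j(x) = 0. -/
/-!
Write `M x = maxᵢ Pᵢ x`. Since the `Pᵢ` are nonnegative, `M x ≤ ∑ᵢ Pᵢ x`, with equality exactly
when at most one `Pᵢ x` is nonzero. Summing over `x`, `∑ₓ M x ≤ n`, with equality exactly when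
equality holds at every point, i.e. when the supports are pairwise disjoint; and since `n ≠ 1`,
the normalized quantity `(∑ₓ M x - 1) / (n - 1)` equals `1` exactly when `∑ₓ M x = n`.
-/

namespace Finset

variable {ι α : Type*} [AddCommMonoid α] [LinearOrder α] [IsOrderedCancelAddMonoid α]
  {s : Finset ι} {f : ι → α}

theorem sup'_le_sum (hs : s.Nonempty) (hf : ∀ i ∈ s, 0 ≤ f i) :
    s.sup' hs f ≤ ∑ i ∈ s, f i :=
  sup'_le hs f fun _ hi => single_le_sum hf hi

theorem sum_eq_apply_iff_of_nonneg [DecidableEq ι] {k : ι} (hf : ∀ i ∈ s, 0 ≤ f i)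
    (hk : k ∈ s) : ∑ i ∈ s, f i = f k ↔ ∀ i ∈ s, i ≠ k → f i = 0 := by
  rw [← add_sum_erase s f hk, add_eq_left,
    sum_eq_zero_iff_of_nonneg fun i hi => hf i (mem_of_mem_erase hi)]
  simp only [mem_erase, and_imp]
  exact forall_congr' fun i => ⟨fun h hi hik => h hik hi, fun h hik hi => h hi hik⟩

theorem sup'_eq_sum_iff (hs : s.Nonempty) (hf : ∀ i ∈ s, 0 ≤ f i) :
    s.sup' hs f = ∑ i ∈ s, f i ↔ ∀ i ∈ s, ∀ j ∈ s, i ≠ j → f i = 0 ∨ f j = 0 := by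
  classical
  obtain ⟨k, hk, hmax⟩ := exists_mem_eq_sup' hs f
  rw [hmax, eq_comm, sum_eq_apply_iff_of_nonneg hf hk]
  constructor
  · intro h i hi j hj hij
    rcases eq_or_ne i k with rfl | hik
    · exact Or.inr (h j hj hij.symm)
    · exact Or.inl (h i hi hik)
  · intro h i hi hik
    -- if the maximum `f k` vanishes, then so does every `f i`
    exact (h i hi k hk hik).elim id fun hk0 =>
      le_antisymm (hk0 ▸ hmax ▸ le_sup' f hi) (hf i hi)

end Finset

open Finset in
theorem multiclass_npc_eq_one_iff {X : Type*} [Fintype X]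
    (n : ℕ) (hn : 2 ≤ n) (P : Fin n → X → ℝ)
    (h0 : ∀ i x, 0 ≤ P i x) (h1 : ∀ i, ∑ x, P i x = 1)
    (hne : (Finset.univ : Finset (Fin n)).Nonempty) :
    ((∑ x, Finset.univ.sup' hne fun i => P i x) - 1) / ((n : ℝ) - 1) = 1
      ↔ ∀ i j : Fin n, i ≠ j → ∀ x, P i x * P j x = 0 := by
  have hn1 : (n : ℝ) - 1 ≠ 0 := by
    rw [sub_ne_zero]; exact_mod_cast (by omega : n ≠ 1)
  have htotal : ∑ x, ∑ i, P i x = n := by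
    rw [sum_comm]; simp [h1]
  calc ((∑ x, univ.sup' hne fun i => P i x) - 1) / ((n : ℝ) - 1) = 1
      ↔ ∑ x, univ.sup' hne (fun i => P i x) = ∑ x, ∑ i, P i x := by
        rw [div_eq_one_iff_eq hn1, sub_left_inj, htotal]
    _ ↔ ∀ x, univ.sup' hne (fun i => P i x) = ∑ i, P i x := by
        rw [sum_eq_sum_iff_of_le fun x _ => sup'_le_sum hne fun i _ => h0 i x]
        simp only [mem_univ, true_implies]
    _ ↔ ∀ i j : Fin n, i ≠ j → ∀ x, P i x * P j x = 0 := by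
        simp only [sup'_eq_sum_iff hne fun i _ => h0 i _, mem_univ, true_implies, mul_eq_zero]
        exact ⟨fun h i j hij x => h x i j hij, fun h x i j hij => h i j hij x⟩
end

section
/- Multi-class NPC equals 0 if and only if all distributions are equal: for probability mass functions P_1, …, P_n on a finite set X with n ≥ 2, ((∑_{x∈X} max_i P_i(x)) − 1)/(n−1) = 0 if and only if P_i = P_j for all i, j. -/
open Finset

section SumSup

variable {ι X M : Type*} [Fintype X] [AddCommMonoid M] [SemilatticeSup M]
  [IsOrderedCancelAddMonoid M]

/-- The pointwise supremum dominates each member of the family, so equal totals force equality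
everywhere. -/
theorem Finset.sup'_apply_eq_of_sum_eq {s : Finset ι} (hs : s.Nonempty) (f : ι → X → M)
    {k : ι} (hk : k ∈ s) (hsum : ∑ x, s.sup' hs (fun i => f i x) = ∑ x, f k x) :
    (fun x => s.sup' hs fun i => f i x) = f k :=
  funext fun x => le_antisymm
    (((sum_eq_sum_iff_of_le fun x _ => le_sup' (fun i => f i x) hk).mp hsum.symm x
      (mem_univ x)).ge)
    (le_sup' (fun i => f i x) hk)

theorem Finset.sum_sup'_eq_iff_forall_eq {s : Finset ι} (hs : s.Nonempty) (f : ι → X → M)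
    {c : M} (hc : ∀ i ∈ s, ∑ x, f i x = c) :
    ∑ x, s.sup' hs (fun i => f i x) = c ↔ ∀ i ∈ s, ∀ j ∈ s, f i = f j := by
  constructor
  · intro h i hi j hj
    rw [← sup'_apply_eq_of_sum_eq hs f hi (h.trans (hc i hi).symm),
      sup'_apply_eq_of_sum_eq hs f hj (h.trans (hc j hj).symm)]
  · intro h
    obtain ⟨k, hk⟩ := id hs
    have hconst : ∀ x, (s.sup' hs fun i => f i x) = f k x := fun x => by
      rw [sup'_congr hs rfl fun i hi => congrFun (h i hi k hk) x, sup'_const]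
    simp_rw [hconst, hc k hk]

end SumSup

theorem multiclass_npc_eq_zero_iff_general {X : Type*} [Fintype X]
    (n : ℕ) (hn : 2 ≤ n) (P : Fin n → X → ℝ)
    (h1 : ∀ i, ∑ x, P i x = 1)
    (hne : (Finset.univ : Finset (Fin n)).Nonempty) :
    ((∑ x, Finset.univ.sup' hne fun i => P i x) - 1) / ((n : ℝ) - 1) = 0
      ↔ ∀ i j : Fin n, P i = P j := by
  have hden : (n : ℝ) - 1 ≠ 0 := by
    have : (2 : ℝ) ≤ n := by exact_mod_cast hn
    linarith
  rw [div_eq_zero_iff, or_iff_left hden, sub_eq_zero,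
    sum_sup'_eq_iff_forall_eq hne P fun i _ => h1 i]
  simp only [mem_univ, forall_const]

theorem multiclass_npc_eq_zero_iff {X : Type*} [Fintype X]
    (n : ℕ) (hn : 2 ≤ n) (P : Fin n → X → ℝ)
    (h0 : ∀ i x, 0 ≤ P i x) (h1 : ∀ i, ∑ x, P i x = 1)
    (hne : (Finset.univ : Finset (Fin n)).Nonempty) :
    ((∑ x, Finset.univ.sup' hne fun i => P i x) - 1) / ((n : ℝ) - 1) = 0
      ↔ ∀ i j : Fin n, P i = P j :=
  multiclass_npc_eq_zero_iff_general n hn P h1 hne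
end

section
/- Let X ⊂ ℝ be finite with more than one element and let P_A, P_B be probability mass functions on X. Then the maximum over all functions g : X → X of ∑_{x∈X} g(x)(P_A(x) − P_B(x)) equals (max X − min X) · (1/2) ∑_{x∈X} |P_A(x) − P_B(x)|, attained by the binarization g(x) = max X if P_A(x) ≥ P_B(x) and g(x) = min X otherwise. -/
/-!
Write `d = P_A - P_B`, `M = max X`, `m = min X`. For `m ≤ y ≤ M` the summand `y * d(x)` is at most
`M * d(x)` when `d(x) ≥ 0` and at most `m * d(x)` otherwise, so the binarization dominates every `g`.
Its value is `∑ ((M + m) / 2 * d + (M - m) / 2 * |d|)`, and the first part vanishes because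
`∑ d = 1 - 1 = 0`.
-/

open Finset

lemma ite_nonneg_mul_eq (m M d : ℝ) :
    (if 0 ≤ d then M else m) * d = (M + m) / 2 * d + (M - m) / 2 * |d| := by
  split_ifs with hd
  · rw [abs_of_nonneg hd]; ring
  · rw [abs_of_neg (not_le.mp hd)]; ring

lemma sum_ite_nonneg_mul_eq {ι : Type*} (s : Finset ι) (m M : ℝ) {f : ι → ℝ}
    (hf : ∑ i ∈ s, f i = 0) :
    ∑ i ∈ s, (if 0 ≤ f i then M else m) * f i = (M - m) * ((1 / 2) * ∑ i ∈ s, |f i|) := by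
  simp only [ite_nonneg_mul_eq, sum_add_distrib, ← mul_sum, hf]
  ring

lemma mul_le_ite_nonneg_mul {m M y : ℝ} (hy : y ∈ Set.Icc m M) (d : ℝ) :
    y * d ≤ (if 0 ≤ d then M else m) * d := by
  split_ifs with hd
  · exact mul_le_mul_of_nonneg_right hy.2 hd
  · exact mul_le_mul_of_nonpos_right hy.1 (not_le.mp hd).le

theorem potential_contrast_isGreatest_general (X : Finset ℝ)
    (PA PB : ℝ → ℝ)
    (hA1 : ∑ x ∈ X, PA x = 1) (hB1 : ∑ x ∈ X, PB x = 1)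
    (hXne : X.Nonempty) :
    IsGreatest {v : ℝ | ∃ g : ℝ → ℝ, (∀ x ∈ X, g x ∈ X) ∧
        v = ∑ x ∈ X, g x * (PA x - PB x)}
      ((X.max' hXne - X.min' hXne) * ((1 / 2) * ∑ x ∈ X, |PA x - PB x|)) ∧
    ∑ x ∈ X, (if PB x ≤ PA x then X.max' hXne else X.min' hXne) * (PA x - PB x)
      = (X.max' hXne - X.min' hXne) * ((1 / 2) * ∑ x ∈ X, |PA x - PB x|) := by
  have hsum : ∑ x ∈ X, (PA x - PB x) = 0 := by rw [sum_sub_distrib, hA1, hB1, sub_self]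
  have key := sum_ite_nonneg_mul_eq X (X.min' hXne) (X.max' hXne) hsum
  simp only [sub_nonneg] at key
  refine ⟨⟨⟨_, fun x _ => ?_, key.symm⟩, ?_⟩, key⟩
  · split_ifs
    exacts [X.max'_mem hXne, X.min'_mem hXne]
  · rintro v ⟨g, hg, rfl⟩
    rw [← key]
    refine sum_le_sum fun x hx => ?_
    simpa only [sub_nonneg] using
      mul_le_ite_nonneg_mul ⟨X.min'_le _ (hg x hx), X.le_max' _ (hg x hx)⟩ (PA x - PB x)

theorem potential_contrast_isGreatest (X : Finset ℝ) (hX : 1 < X.card)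
    (PA PB : ℝ → ℝ)
    (hA0 : ∀ x ∈ X, 0 ≤ PA x) (hB0 : ∀ x ∈ X, 0 ≤ PB x)
    (hA1 : ∑ x ∈ X, PA x = 1) (hB1 : ∑ x ∈ X, PB x = 1)
    (hXne : X.Nonempty) :
    IsGreatest {v : ℝ | ∃ g : ℝ → ℝ, (∀ x ∈ X, g x ∈ X) ∧
        v = ∑ x ∈ X, g x * (PA x - PB x)}
      ((X.max' hXne - X.min' hXne) * ((1 / 2) * ∑ x ∈ X, |PA x - PB x|)) ∧
    ∑ x ∈ X, (if PB x ≤ PA x then X.max' hXne else X.min' hXne) * (PA x - PB x)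
      = (X.max' hXne - X.min' hXne) * ((1 / 2) * ∑ x ∈ X, |PA x - PB x|) :=
  potential_contrast_isGreatest_general X PA PB hA1 hB1 hXne
end
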